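/- For every integer m ≥ 0, π/6 = √5 · ∑_{n=0}^∞ ((−1)^n/(2n+1)) · F_{(2m+1)(2n+1)} · (2 / (√15·F_{2m+1} + √(15·F_{2m+1}² + 4)))^{2n+1}, where the series on the right converges. -/

import Mathlib

set_option maxHeartbeats 1000000

open Real goldenRatio

theorem pi_div_six_fib_series (m : ℕ) :
    Summable
      (fun n : ℕ => (-1 : ℝ) ^ n / (2 * (n : ℝ) + 1) *
        (Nat.fib ((2 * m + 1) * (2 * n + 1)) : ℝ) *
        (2 / (Real.sqrt 15 * (Nat.fib (2 * m + 1) : ℝ) +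
          Real.sqrt (15 * (Nat.fib (2 * m + 1) : ℝ) ^ 2 + 4))) ^ (2 * n + 1)) ∧
    Real.pi / 6 = Real.sqrt 5 *
      ∑' n : ℕ, (-1 : ℝ) ^ n / (2 * (n : ℝ) + 1) *
        (Nat.fib ((2 * m + 1) * (2 * n + 1)) : ℝ) *
        (2 / (Real.sqrt 15 * (Nat.fib (2 * m + 1) : ℝ) +
          Real.sqrt (15 * (Nat.fib (2 * m + 1) : ℝ) ^ 2 + 4))) ^ (2 * n + 1) := by
  set K := 2 * m + 1 with hK
  set F : ℝ := (Nat.fib K : ℝ) with hF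
  have hFpos : (0 : ℝ) < F := by
    have h : 0 < Nat.fib K := Nat.fib_pos.mpr (by omega)
    rw [hF]; exact_mod_cast h
  have hF1 : (1 : ℝ) ≤ F := by
    have h : 1 ≤ Nat.fib K := Nat.fib_pos.mpr (by omega)
    rw [hF]; exact_mod_cast h
  have h15 : (0:ℝ) < Real.sqrt 15 := Real.sqrt_pos.mpr (by norm_num)
  have hs15sq : Real.sqrt 15 ^ 2 = 15 := Real.sq_sqrt (by norm_num)
  set r : ℝ := Real.sqrt (15 * F ^ 2 + 4) with hr
  have hrsq : r ^ 2 = 15 * F ^ 2 + 4 := Real.sq_sqrt (by positivity)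
  have hrgt : Real.sqrt 15 * F < r := by
    have h1 : Real.sqrt (15 * F ^ 2) < r := by
      apply Real.sqrt_lt_sqrt (by positivity); nlinarith
    calc Real.sqrt 15 * F = Real.sqrt (15 * F ^ 2) := by
          rw [Real.sqrt_mul (by norm_num), Real.sqrt_sq hFpos.le]
      _ < r := h1
  have hrpos : 0 < r := lt_trans (by positivity) hrgt
  set T : ℝ := Real.sqrt 15 * F + r with hT
  have hTpos : 0 < T := by positivity
  set x : ℝ := 2 / T with hx
  have hxpos : 0 < x := by positivity
  have hT2 : 2 < T := by
    have h4 : (2:ℝ) ≤ r := by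
      have : Real.sqrt 4 ≤ r := Real.sqrt_le_sqrt (by nlinarith)
      rwa [show (4:ℝ) = 2^2 by norm_num, Real.sqrt_sq (by norm_num)] at this
    nlinarith
  have hx1 : x < 1 := by
    rw [hx, div_lt_one hTpos]; exact hT2
  -- key identity : 1 - x^2 = √15 * F * x
  have hkey : 1 - x ^ 2 = Real.sqrt 15 * F * x := by
    have hTsq : T ^ 2 - 2 * (Real.sqrt 15 * F) * T - 4 = 0 := by
      rw [hT]; nlinarith
    rw [hx]
    field_simp
    nlinarith
  -- bound: √15 * F * x < 1
  have hxF : Real.sqrt 15 * F * x < 1 := by nlinarith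
  -- golden ratio facts
  have hgold : (0:ℝ) < φ := goldenRatio_pos
  have hpsi : -ψ = φ⁻¹ := by rw [inv_goldenRatio]
  have hpsipos : (0:ℝ) < -ψ := by rw [hpsi]; positivity
  have hpsilt : -ψ < 1 := by
    rw [hpsi]; exact inv_lt_one_of_one_lt₀ one_lt_goldenRatio
  -- Binet for odd index: φ^j - ψ^j = √5 * fib j, and for odd j, (-ψ)^j = -ψ^j
  have hbinet : ∀ j : ℕ, φ ^ j - ψ ^ j = Real.sqrt 5 * (Nat.fib j : ℝ) := by
    intro j
    rw [Real.coe_fib_eq]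
    have h5 : Real.sqrt 5 ≠ 0 := by positivity
    field_simp
  set a : ℝ := φ ^ K * x with ha
  set b : ℝ := (-ψ) ^ K * x with hb
  have hKodd : Odd K := ⟨m, by omega⟩
  have hnegpsiK : (-ψ) ^ K = -ψ ^ K := hKodd.neg_pow ψ
  have hapos : 0 < a := by positivity
  have hbpos : 0 < b := by positivity
  have haF : φ ^ K < Real.sqrt 15 * F := by
    have h1 : φ ^ K - ψ ^ K = Real.sqrt 5 * F := hbinet K
    have h2 : ψ ^ K < 0 := by
      have := hKodd.pow_neg (goldenConj_neg); exact this
    have h3 : Real.sqrt 5 < Real.sqrt 15 := by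
      apply Real.sqrt_lt_sqrt <;> norm_num
    nlinarith [Real.sqrt_nonneg 5]
  have ha1 : a < 1 := by
    rw [ha]
    calc φ ^ K * x < Real.sqrt 15 * F * x := by
          apply mul_lt_mul_of_pos_right haF hxpos
      _ < 1 := hxF
  have hb1 : b < 1 := by
    rw [hb]
    have h1 : (-ψ) ^ K < 1 := pow_lt_one₀ hpsipos.le hpsilt (by omega)
    calc (-ψ) ^ K * x < 1 * x := by
          apply mul_lt_mul_of_pos_right h1 hxpos
      _ = x := one_mul x
      _ < 1 := hx1
  have hab : a * b < 1 := by nlinarith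
  -- arctan power series for a and b
  have hsa : HasSum (fun n : ℕ => (-1:ℝ) ^ n * a ^ (2 * n + 1) / ↑(2 * n + 1))
      (Real.arctan a) := Real.hasSum_arctan (by rw [Real.norm_eq_abs, abs_of_pos hapos]; exact ha1)
  have hsb : HasSum (fun n : ℕ => (-1:ℝ) ^ n * b ^ (2 * n + 1) / ↑(2 * n + 1))
      (Real.arctan b) := Real.hasSum_arctan (by rw [Real.norm_eq_abs, abs_of_pos hbpos]; exact hb1)
  have hsum := hsa.add hsb
  -- identify the termwise sum with √5 * (series term)
  have hterm : ∀ n : ℕ,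
      (-1:ℝ) ^ n * a ^ (2 * n + 1) / ↑(2 * n + 1) + (-1:ℝ) ^ n * b ^ (2 * n + 1) / ↑(2 * n + 1)
      = Real.sqrt 5 * ((-1 : ℝ) ^ n / (2 * (n : ℝ) + 1) *
          (Nat.fib (K * (2 * n + 1)) : ℝ) * x ^ (2 * n + 1)) := by
    intro n
    have hodd : Odd (K * (2 * n + 1)) := hKodd.mul ⟨n, by omega⟩
    have h1 : a ^ (2 * n + 1) + b ^ (2 * n + 1)
        = Real.sqrt 5 * (Nat.fib (K * (2 * n + 1)) : ℝ) * x ^ (2 * n + 1) := by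
      rw [ha, hb, mul_pow, mul_pow, ← pow_mul, ← pow_mul, ← add_mul,
        hodd.neg_pow ψ]
      rw [show φ ^ (K * (2 * n + 1)) + -ψ ^ (K * (2 * n + 1))
        = φ ^ (K * (2 * n + 1)) - ψ ^ (K * (2 * n + 1)) by ring, hbinet]
    have hc : ((2 * n + 1 : ℕ) : ℝ) = 2 * (n:ℝ) + 1 := by push_cast; ring
    rw [← add_div, ← mul_add, h1, hc]
    ring
  have hsum2 : HasSum (fun n : ℕ => Real.sqrt 5 * ((-1 : ℝ) ^ n / (2 * (n : ℝ) + 1) *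
      (Nat.fib (K * (2 * n + 1)) : ℝ) * x ^ (2 * n + 1)))
      (Real.arctan a + Real.arctan b) := by
    convert hsum using 1; funext n; exact (hterm n).symm
  -- compute arctan a + arctan b = π / 6
  have hval : Real.arctan a + Real.arctan b = Real.pi / 6 := by
    rw [Real.arctan_add hab]
    have haddab : a + b = Real.sqrt 5 * F * x := by
      rw [ha, hb, hnegpsiK, ← add_mul,
        show φ ^ K + -ψ ^ K = φ ^ K - ψ ^ K by ring, hbinet, hF]
    have hmulab : a * b = x ^ 2 := by
      rw [ha, hb]
      have : φ ^ K * (-ψ) ^ K = 1 := by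
        rw [← mul_pow, show φ * -ψ = -(φ * ψ) by ring, goldenRatio_mul_goldenConj]
        norm_num
      calc φ ^ K * x * ((-ψ) ^ K * x) = φ ^ K * (-ψ) ^ K * (x * x) := by ring
        _ = x ^ 2 := by rw [this]; ring
    rw [haddab, hmulab, hkey]
    have h35 : Real.sqrt 5 * F * x / (Real.sqrt 15 * F * x) = 1 / Real.sqrt 3 := by
      have h15' : Real.sqrt 15 = Real.sqrt 3 * Real.sqrt 5 := by
        rw [← Real.sqrt_mul (by norm_num)]; norm_num
      have h3 : (0:ℝ) < Real.sqrt 3 := Real.sqrt_pos.mpr (by norm_num)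
      have h5 : (0:ℝ) < Real.sqrt 5 := Real.sqrt_pos.mpr (by norm_num)
      rw [h15']
      field_simp
    rw [h35, ← Real.tan_pi_div_six, Real.arctan_tan] <;> linarith [Real.pi_pos]
  rw [hval] at hsum2
  have h5pos : (0:ℝ) < Real.sqrt 5 := Real.sqrt_pos.mpr (by norm_num)
  constructor
  · have := hsum2.summable.mul_left (Real.sqrt 5)⁻¹
    refine this.congr fun n => ?_
    rw [← mul_assoc, inv_mul_cancel₀ h5pos.ne', one_mul]
  · rw [← hsum2.tsum_eq, ← tsum_mul_left]
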